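/- Let d be a positive integer and let g : ℂ² → ℂ² be a map satisfying g(G(u,v)) = G(T_d(u), T_d(v)) for all u, v ∈ ℂ. Then (1) for every z ∈ ℂ, g((1+z)², (1+z)³) = ((1+T_d(z))², (1+T_d(z))³); and (2) g maps the cuspidal cubic C_C = {(p,q) ∈ ℂ² : p³ = q²} onto itself: g(C_C) = C_C. -/

import Mathlib

/-- The polynomial parametrization of ℂ²/D₃ ≅ ℂ². -/
noncomputable def G (u v : ℂ) : ℂ × ℂ :=
  (1 + u * v + v ^ 2, (-2 + u ^ 2 + 6 * v ^ 2 + u * v * (3 + v ^ 2)) / 2)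

/-!
At `u = 2` the parametrization `G` restricts to the cusp parametrization `w ↦ ((1+w)², (1+w)³)`,
and `T_d(2) = 2`, so the semiconjugacy `g ∘ G = G ∘ (T_d × T_d)` at `u = 2` gives part (1).
Every point of `p³ = q²` is `(t², t³)` for some `t`, and `T_d : ℂ → ℂ` is surjective
(write `c = y + y⁻¹`, take `s` with `sᵈ = y`, then `T_d(s + s⁻¹) = c`), so part (1) shows
that `g` maps the cusp onto itself.
-/

open Polynomial

lemma G_two_left (w : ℂ) : G 2 w = ((1 + w) ^ 2, (1 + w) ^ 3) := by
  ext <;> simp only [G] <;> ring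

section CuspidalCubic

variable (K : Type*) [Field K]

def cuspidalCubic : Set (K × K) := {pq | pq.1 ^ 3 = pq.2 ^ 2}

variable {K}

lemma exists_eq_sq_and_eq_cube_of_cube_eq_sq {p q : K} (h : p ^ 3 = q ^ 2) :
    ∃ t : K, p = t ^ 2 ∧ q = t ^ 3 := by
  by_cases hp : p = 0
  · have hq : q = 0 := pow_eq_zero_iff two_ne_zero |>.mp (by rw [← h, hp]; ring)
    exact ⟨0, by simp [hp], by simp [hq]⟩
  · refine ⟨q / p, ?_, ?_⟩
    · field_simp
      linear_combination h
    · field_simp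
      linear_combination q * h

lemma cuspidalCubic_eq_range :
    cuspidalCubic K = Set.range fun t : K => (t ^ 2, t ^ 3) := by
  ext ⟨p, q⟩
  constructor
  · rintro h
    obtain ⟨t, rfl, rfl⟩ := exists_eq_sq_and_eq_cube_of_cube_eq_sq h
    exact ⟨t, rfl⟩
  · rintro ⟨t, ⟨⟩⟩
    show (t ^ 2) ^ 3 = (t ^ 3) ^ 2
    ring

lemma cuspidalCubic_eq_range_one_add :
    cuspidalCubic K = Set.range fun z : K => ((1 + z) ^ 2, (1 + z) ^ 3) := by
  rw [cuspidalCubic_eq_range, ← (add_left_surjective (1 : K)).range_comp]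
  rfl

end CuspidalCubic

section Chebyshev

variable (K : Type*) [Field K]

def IsNormalizedChebyshev (d : ℕ) (T : ℤ[X]) : Prop :=
  ∀ s : K, s ≠ 0 → aeval (s + s⁻¹) T = s ^ (d : ℤ) + s ^ (-(d : ℤ))

variable {K}

lemma IsNormalizedChebyshev.aeval_two {d : ℕ} {T : ℤ[X]} (hT : IsNormalizedChebyshev K d T) :
    aeval (2 : K) T = 2 := by
  simpa [one_add_one_eq_two] using hT 1 one_ne_zero

lemma IsAlgClosed.exists_ne_zero_add_inv_eq [IsAlgClosed K] (c : K) :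
    ∃ y : K, y ≠ 0 ∧ y + y⁻¹ = c := by
  have hdeg : (X ^ 2 - C c * X + 1 : K[X]).degree ≠ 0 := by
    rw [show (X ^ 2 - C c * X + 1 : K[X]).degree = 2 by compute_degree!]
    norm_num
  obtain ⟨y, hy⟩ := IsAlgClosed.exists_root _ hdeg
  have hy : y ^ 2 - c * y + 1 = 0 := by simpa using hy
  have hy0 : y ≠ 0 := by
    rintro rfl
    norm_num at hy
  refine ⟨y, hy0, ?_⟩
  field_simp
  linear_combination hy

lemma IsNormalizedChebyshev.surjective_aeval [IsAlgClosed K] {d : ℕ} (hd : 0 < d) {T : ℤ[X]}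
    (hT : IsNormalizedChebyshev K d T) : Function.Surjective fun z : K => aeval z T := by
  intro c
  obtain ⟨y, hy0, rfl⟩ := IsAlgClosed.exists_ne_zero_add_inv_eq c
  obtain ⟨s, rfl⟩ := IsAlgClosed.exists_pow_nat_eq y hd
  have hs0 : s ≠ 0 := by
    rintro rfl
    exact hy0 (zero_pow hd.ne')
  exact ⟨s + s⁻¹, by simp only [hT s hs0, zpow_neg, zpow_natCast]⟩

end Chebyshev

theorem g_maps_cuspidal_cubic_onto_itself (d : ℕ) (hd : 0 < d) (T : Polynomial ℤ)
    (hT : ∀ s : ℂ, s ≠ 0 → Polynomial.aeval (s + s⁻¹) T = s ^ (d : ℤ) + s ^ (-(d : ℤ)))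
    (g : ℂ × ℂ → ℂ × ℂ)
    (hg : ∀ u v : ℂ, g (G u v) = G (Polynomial.aeval u T) (Polynomial.aeval v T)) :
    (∀ z : ℂ, g ((1 + z) ^ 2, (1 + z) ^ 3)
        = ((1 + Polynomial.aeval z T) ^ 2, (1 + Polynomial.aeval z T) ^ 3)) ∧
      g '' {pq : ℂ × ℂ | pq.1 ^ 3 = pq.2 ^ 2} = {pq : ℂ × ℂ | pq.1 ^ 3 = pq.2 ^ 2} := by
  have hT : IsNormalizedChebyshev ℂ d T := hT
  have on_cusp (z : ℂ) :
      g ((1 + z) ^ 2, (1 + z) ^ 3) = ((1 + aeval z T) ^ 2, (1 + aeval z T) ^ 3) := by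
    simpa only [G_two_left, hT.aeval_two] using hg 2 z
  refine ⟨on_cusp, ?_⟩
  change g '' cuspidalCubic ℂ = cuspidalCubic ℂ
  calc g '' cuspidalCubic ℂ
      = Set.range (g ∘ fun z : ℂ => ((1 + z) ^ 2, (1 + z) ^ 3)) := by
        rw [Set.range_comp, cuspidalCubic_eq_range_one_add]
    _ = Set.range ((fun z : ℂ => ((1 + z) ^ 2, (1 + z) ^ 3)) ∘ fun z => aeval z T) :=
        congrArg Set.range (funext on_cusp)
    _ = cuspidalCubic ℂ := by
        rw [(hT.surjective_aeval hd).range_comp, cuspidalCubic_eq_range_one_add]
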